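/- arXiv:2402.02743 — 2 statements merged into one kernel-verified Lean document; each statement's English description precedes it below -/
import Mathlib

section
/- For every n ≥ 1 and every subset I of {1,…,n}, the number of permutations σ of {1,…,n} with left-succession value set exactly I equals the number of permutations τ of {1,…,n} with fixed-point set exactly I. Here, with σ(0)=0, the left-succession value set is L̄(σ) = {σ(i) : 1 ≤ i ≤ n, σ(i-1)+1 = σ(i)}, and the fixed-point set of τ is F(τ) = {i : τ(i) = i}. -/
/-!
Möbius inversion on the subsets of `{1,…,n}` reduces the claim to the numbers of permutations
whose set contains a given `J`, and for both statistics that number is `(n - |J|)!`. For fixed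
points these are the permutations of the complement of `J`. For left successions,
`v ∈ L̄(σ)` iff `σ⁻¹(v) = σ⁻¹(v-1) + 1`; deleting the position `v = max J` and its value from
`σ⁻¹` is a bijection onto the permutations of `{1,…,n-1}` with these successions at `J \ {v}`,
because the deleted value is recovered as one more than the value at position `v - 1`.
-/

open Finset

/-- The value `σ(i)` of a permutation of `{1,…,n}` at a one-based position `i`,
with the convention `σ(0) = 0` (and value `0` outside `[1,n]`). -/
def pv {n : ℕ} (σ : Equiv.Perm (Fin n)) (i : ℕ) : ℕ :=
  if h : 1 ≤ i ∧ i ≤ n then ((σ ⟨i - 1, by omega⟩ : Fin n) : ℕ) + 1 else 0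

/-- The left-succession value set: `L̄(σ) = {σ(i) : 1 ≤ i ≤ n, σ(i-1)+1 = σ(i)}` (with `σ(0)=0`). -/
def Lbar {n : ℕ} (σ : Equiv.Perm (Fin n)) : Finset ℕ :=
  ((Finset.Icc 1 n).filter (fun i => pv σ (i - 1) + 1 = pv σ i)).image (pv σ)

/-- The fixed-point set: `F(τ) = {1 ≤ i ≤ n : τ(i) = i}`. -/
def Fset {n : ℕ} (τ : Equiv.Perm (Fin n)) : Finset ℕ :=
  (Finset.Icc 1 n).filter (fun i => pv τ i = i)

open Equiv
open scoped Nat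

section Inversion

variable {ι : Type*} [DecidableEq ι]

theorem Finset.card_filter_subset_eq_sum {α : Type*} [Fintype α] {S : α → Finset ι}
    {U : Finset ι} (hS : ∀ x, S x ⊆ U) (I : Finset ι) :
    #{x | I ⊆ S x} = ∑ J ∈ U.powerset with I ⊆ J, #{x | S x = J} := by
  rw [card_eq_sum_card_fiberwise (f := S) (t := U.powerset.filter (I ⊆ ·))
    fun x hx => by simpa [hS x] using hx]
  refine sum_congr rfl fun J hJ => ?_
  rw [filter_filter]
  refine congrArg card (filter_congr fun x _ => ?_)
  simp only [mem_filter] at hJ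
  exact ⟨And.right, fun h => ⟨h ▸ hJ.2, h⟩⟩

theorem Finset.eq_of_sum_superset_eq {M : Type*} [AddCancelCommMonoid M] {U : Finset ι}
    {f g : Finset ι → M}
    (h : ∀ I ⊆ U, ∑ J ∈ U.powerset with I ⊆ J, f J = ∑ J ∈ U.powerset with I ⊆ J, g J) :
    ∀ I ⊆ U, f I = g I := by
  refine fun I hI => strongDownwardInductionOn (p := fun I => I ⊆ U → f I = g I) I
    (fun I ih _ hI => ?_) (card_le_card hI) hI
  have hmem : I ∈ U.powerset.filter (I ⊆ ·) := by simp [hI]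
  have hrest : ∑ J ∈ (U.powerset.filter (I ⊆ ·)).erase I, f J =
      ∑ J ∈ (U.powerset.filter (I ⊆ ·)).erase I, g J := by
    refine sum_congr rfl fun J hJ => ?_
    obtain ⟨hJI, hJ⟩ := mem_erase.mp hJ
    simp only [mem_filter, mem_powerset] at hJ
    exact ih (card_le_card hJ.1) (ssubset_of_subset_of_ne hJ.2 hJI.symm) hJ.1
  have := h I hI
  rw [← add_sum_erase _ _ hmem, ← add_sum_erase _ _ hmem, hrest] at this
  exact add_right_cancel this

end Inversion

theorem Equiv.Perm.card_filter_forall_mem_apply_eq_self {α : Type*} [Fintype α]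
    [DecidableEq α] (s : Finset α) :
    #{σ : Perm α | ∀ a ∈ s, σ a = a} = (Fintype.card α - #s)! := by
  have e : {σ : Perm α // ∀ a ∈ s, σ a = a} ≃ Perm {a // a ∉ s} :=
    (Equiv.subtypeEquivRight fun σ => by simp only [not_not]).trans
      (Perm.subtypeEquivSubtypePerm (· ∉ s)).symm
  rw [← Fintype.card_subtype, Fintype.card_congr e, Fintype.card_perm,
    Fintype.card_subtype_compl, Fintype.card_coe]

section OneBased

variable {n : ℕ} (σ : Perm (Fin n))

@[simp]
lemma pv_zero : pv σ 0 = 0 := dif_neg (by omega)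

lemma pv_val_add_one (x : Fin n) : pv σ (x + 1) = σ x + 1 := by
  simp [pv]

lemma pv_of_lt {i : ℕ} (h : n < i) : pv σ i = 0 := dif_neg (by omega)

lemma pv_le (i : ℕ) : pv σ i ≤ n := by
  unfold pv; split_ifs <;> omega

lemma exists_val_add_one {i : ℕ} (h1 : 1 ≤ i) (h2 : i ≤ n) : ∃ x : Fin n, (x : ℕ) + 1 = i :=
  ⟨⟨i - 1, by omega⟩, by simp; omega⟩

lemma pv_inv_pv {i : ℕ} (hi : i ≤ n) : pv σ⁻¹ (pv σ i) = i := by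
  rcases Nat.eq_zero_or_pos i with rfl | h
  · simp
  obtain ⟨x, rfl⟩ := exists_val_add_one h hi
  simp [pv_val_add_one]

lemma pv_injOn : Set.InjOn (pv σ) (Set.Iic n) := fun i hi j hj h => by
  rw [← pv_inv_pv σ hi, ← pv_inv_pv σ hj, h]

lemma Lbar_subset_Icc : Lbar σ ⊆ Icc 1 n := by
  intro v hv
  simp only [Lbar, mem_image, mem_filter, mem_Icc] at hv
  obtain ⟨i, ⟨hi, -⟩, rfl⟩ := hv
  obtain ⟨x, rfl⟩ := exists_val_add_one hi.1 hi.2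
  simp [pv_val_add_one]

theorem mem_Lbar_iff (v : ℕ) : v ∈ Lbar σ ↔ pv σ⁻¹ v = pv σ⁻¹ (v - 1) + 1 := by
  constructor
  · intro hv
    obtain ⟨i, ⟨hi, hsucc⟩, rfl⟩ := by simpa only [Lbar, mem_image, mem_filter] using hv
    obtain ⟨hi1, hin⟩ := mem_Icc.mp hi
    rw [pv_inv_pv σ hin, ← hsucc, Nat.add_sub_cancel, pv_inv_pv σ (by omega)]
    omega
  · intro h
    have hv : 1 ≤ v ∧ v ≤ n := by
      by_contra! hv
      rcases Nat.eq_zero_or_pos v with rfl | hv'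
      · simp at h
      · rw [pv_of_lt _ (hv hv')] at h; omega
    have hσ := pv_inv_pv σ⁻¹ (i := v) hv.2
    have hσ' := pv_inv_pv σ⁻¹ (i := v - 1) (by omega)
    rw [inv_inv] at hσ hσ'
    simp only [Lbar, mem_image, mem_filter, mem_Icc]
    refine ⟨pv σ⁻¹ v, ⟨⟨by omega, pv_le _ _⟩, ?_⟩, hσ⟩
    rw [h, Nat.add_sub_cancel, hσ', ← h, hσ]
    omega

end OneBased

lemma Fin.val_succAbove {n : ℕ} (c : Fin (n + 1)) (y : Fin n) :
    (c.succAbove y : ℕ) = if (y : ℕ) < c then (y : ℕ) else (y : ℕ) + 1 := by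
  unfold Fin.succAbove
  split_ifs <;> simp_all [Fin.lt_def]

namespace Equiv.Perm

variable {n : ℕ}

/-- `insertAt p c σ` inserts the value `c` at position `p` of the one-line notation of `σ`,
shifting the larger positions and values up by one; `removeAt p` undoes it. -/
def insertAt (p c : Fin (n + 1)) (σ : Perm (Fin n)) : Perm (Fin (n + 1)) :=
  (finSuccEquiv' p).trans ((optionCongr σ).trans (finSuccEquiv' c).symm)

def removeAt (p : Fin (n + 1)) (σ : Perm (Fin (n + 1))) : Perm (Fin n) :=
  removeNone ((finSuccEquiv' p).symm.trans (σ.trans (finSuccEquiv' (σ p))))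

@[simp]
lemma insertAt_apply_self (p c : Fin (n + 1)) (σ : Perm (Fin n)) : insertAt p c σ p = c := by
  simp [insertAt]

@[simp]
lemma insertAt_apply_succAbove (p c : Fin (n + 1)) (σ : Perm (Fin n)) (x : Fin n) :
    insertAt p c σ (p.succAbove x) = c.succAbove (σ x) := by
  simp [insertAt]

lemma succAbove_removeAt_apply (p : Fin (n + 1)) (σ : Perm (Fin (n + 1))) (x : Fin n) :
    (σ p).succAbove (removeAt p σ x) = σ (p.succAbove x) := by
  set τ := (finSuccEquiv' p).symm.trans (σ.trans (finSuccEquiv' (σ p)))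
  have hne : σ (p.succAbove x) ≠ σ p := σ.injective.ne (Fin.succAbove_ne p x)
  obtain ⟨y, hy⟩ := Option.ne_none_iff_exists'.mp
    (fun h => hne ((finSuccEquiv' (σ p)).injective (h.trans (finSuccEquiv'_at _).symm)))
  have hτ : τ (some x) = some y := by simpa [τ] using hy
  have hx : removeAt p σ x = y := by
    simpa [removeAt, τ, hτ] using removeNone_some τ ⟨y, hτ⟩
  rw [hx, ← finSuccEquiv'_symm_some, ← hy, Equiv.symm_apply_apply]

lemma removeAt_insertAt (p c : Fin (n + 1)) (σ : Perm (Fin n)) :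
    removeAt p (insertAt p c σ) = σ := by
  ext x
  have h := succAbove_removeAt_apply p (insertAt p c σ) x
  rw [insertAt_apply_succAbove, insertAt_apply_self] at h
  exact congrArg Fin.val (Fin.succAbove_right_injective h)

lemma insertAt_removeAt (p : Fin (n + 1)) (σ : Perm (Fin (n + 1))) :
    insertAt p (σ p) (removeAt p σ) = σ := by
  ext y
  rcases eq_or_ne y p with rfl | hy
  · rw [insertAt_apply_self]
  · obtain ⟨x, rfl⟩ := Fin.exists_succAbove_eq hy
    rw [insertAt_apply_succAbove, succAbove_removeAt_apply]


lemma pv_insertAt_of_le {p : Fin (n + 1)} (c : Fin (n + 1)) (σ : Perm (Fin n)) {w : ℕ}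
    (hw : w ≤ p) : pv (insertAt p c σ) w = if pv σ w ≤ c then pv σ w else pv σ w + 1 := by
  rcases Nat.eq_zero_or_pos w with rfl | hw0
  · simp
  obtain ⟨x, rfl⟩ := exists_val_add_one hw0 (by omega : w ≤ n)
  have hx : (x : ℕ) = p.succAbove x := by
    rw [Fin.val_succAbove, if_pos (by omega)]
  rw [pv_val_add_one, hx, pv_val_add_one, insertAt_apply_succAbove, Fin.val_succAbove]
  split_ifs <;> omega

lemma pv_insertAt_add_one (p c : Fin (n + 1)) (σ : Perm (Fin n)) :
    pv (insertAt p c σ) (p + 1) = c + 1 := by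
  rw [pv_val_add_one, insertAt_apply_self]

/-- Inserts at position `p` one more than the value at the one-based position `p` (`0` if
`p = 0`), which makes `p + 1` a left-succession position. -/
def insertSuccAt (p : Fin (n + 1)) (σ : Perm (Fin n)) : Perm (Fin (n + 1)) :=
  insertAt p ⟨pv σ p, Nat.lt_succ_of_le (pv_le σ p)⟩ σ

lemma pv_insertSuccAt_add_one (p : Fin (n + 1)) (σ : Perm (Fin n)) :
    pv (insertSuccAt p σ) (p + 1) = pv (insertSuccAt p σ) p + 1 := by
  rw [insertSuccAt, pv_insertAt_add_one, pv_insertAt_of_le _ _ le_rfl, if_pos le_rfl]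

lemma insertSuccAt_succ_iff {p : Fin (n + 1)} (σ : Perm (Fin n)) {w : ℕ} (hw : w ≤ p) :
    pv (insertSuccAt p σ) w = pv (insertSuccAt p σ) (w - 1) + 1 ↔
      pv σ w = pv σ (w - 1) + 1 := by
  rcases Nat.eq_zero_or_pos w with rfl | hw0
  · simp
  have hp : (p : ℕ) ≤ n := Nat.lt_succ_iff.mp p.isLt
  have hne : pv σ w ≠ pv σ (w - 1) :=
    (pv_injOn σ).ne (Set.mem_Iic.mpr (by omega)) (Set.mem_Iic.mpr (by omega)) (by omega)
  have hne' : pv σ (w - 1) ≠ pv σ p :=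
    (pv_injOn σ).ne (Set.mem_Iic.mpr (by omega)) (Set.mem_Iic.mpr hp) (by omega)
  rw [insertSuccAt, pv_insertAt_of_le _ _ hw, pv_insertAt_of_le _ _ (by omega)]
  dsimp only
  split_ifs <;> omega

lemma removeAt_insertSuccAt (p : Fin (n + 1)) (σ : Perm (Fin n)) :
    removeAt p (insertSuccAt p σ) = σ :=
  removeAt_insertAt _ _ _

lemma insertSuccAt_removeAt {p : Fin (n + 1)} {σ : Perm (Fin (n + 1))}
    (h : pv σ (p + 1) = pv σ p + 1) : insertSuccAt p (removeAt p σ) = σ := by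
  have hpv := pv_insertAt_of_le (σ p) (removeAt p σ) (le_refl (p : ℕ))
  rw [insertAt_removeAt] at hpv
  rw [pv_val_add_one] at h
  have hval : pv (removeAt p σ) p = σ p := by
    split_ifs at hpv <;> omega
  conv_rhs => rw [← insertAt_removeAt p σ]
  exact congrArg (insertAt p · _) (Fin.ext hval)

end Equiv.Perm

lemma card_forall_succ_insert {n : ℕ} (p : Fin (n + 1)) {s : Finset ℕ} (hs : ∀ w ∈ s, w ≤ p) :
    #{σ : Perm (Fin (n + 1)) | ∀ w ∈ insert (p.succ : ℕ) s, pv σ w = pv σ (w - 1) + 1} =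
      #{σ : Perm (Fin n) | ∀ w ∈ s, pv σ w = pv σ (w - 1) + 1} := by
  simp only [forall_mem_insert, Fin.val_succ, Nat.add_sub_cancel]
  refine card_nbij' (Perm.removeAt p) (Perm.insertSuccAt p) (fun σ hσ => ?_) (fun σ hσ => ?_)
    (fun σ hσ => ?_) (fun σ _ => Perm.removeAt_insertSuccAt p σ)
  · simp only [coe_filter, mem_univ, true_and, Set.mem_ofPred_eq] at hσ ⊢
    rw [← Perm.insertSuccAt_removeAt hσ.1] at hσ
    exact fun w hw => (Perm.insertSuccAt_succ_iff _ (hs w hw)).mp (hσ.2 w hw)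
  · simp only [coe_filter, mem_univ, true_and, Set.mem_ofPred_eq] at hσ ⊢
    exact ⟨Perm.pv_insertSuccAt_add_one p σ,
      fun w hw => (Perm.insertSuccAt_succ_iff σ (hs w hw)).mpr (hσ w hw)⟩
  · simp only [coe_filter, mem_univ, true_and, Set.mem_ofPred_eq] at hσ
    exact Perm.insertSuccAt_removeAt hσ.1

theorem card_forall_succ {n : ℕ} {I : Finset ℕ} (hI : I ⊆ Icc 1 n) :
    #{σ : Perm (Fin n) | ∀ w ∈ I, pv σ w = pv σ (w - 1) + 1} = (n - #I)! := by
  induction I using Finset.induction_on_max generalizing n with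
  | empty => simp [Fintype.card_perm]
  | insert a s hlt ih =>
    obtain ⟨ha1, han⟩ := mem_Icc.mp (hI (mem_insert_self a s))
    obtain ⟨m, rfl⟩ : ∃ m, n = m + 1 := ⟨n - 1, by omega⟩
    have hs : s ⊆ Icc 1 m := fun w hw => by
      have := mem_Icc.mp (hI (mem_insert_of_mem hw))
      have := hlt w hw
      simp only [mem_Icc]; omega
    have key := card_forall_succ_insert (⟨a - 1, by omega⟩ : Fin (m + 1))
      (s := s) (fun w hw => by have := hlt w hw; simp only; omega)
    simp only [Fin.val_succ, Nat.sub_add_cancel ha1] at key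
    rw [key, ih hs, card_insert_of_notMem fun h => (hlt a h).false]
    congr 1; omega

theorem card_filter_subset_Lbar {n : ℕ} {I : Finset ℕ} (hI : I ⊆ Icc 1 n) :
    #{σ : Perm (Fin n) | I ⊆ Lbar σ} = (n - #I)! := by
  rw [← card_forall_succ hI]
  refine card_nbij' (·⁻¹) (·⁻¹) ?_ ?_ (fun σ _ => inv_inv σ) (fun σ _ => inv_inv σ) <;>
    intro σ <;> simp [subset_iff, mem_Lbar_iff]

theorem card_filter_subset_Fset {n : ℕ} {I : Finset ℕ} (hI : I ⊆ Icc 1 n) :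
    #{τ : Perm (Fin n) | I ⊆ Fset τ} = (n - #I)! := by
  set A : Finset (Fin n) := {a | (a : ℕ) + 1 ∈ I}
  have hA : #A = #I := by
    refine card_nbij (fun a => (a : ℕ) + 1) (fun a ha => (mem_filter.mp ha).2)
      (fun a _ b _ h => Fin.ext (by simpa using h)) fun w hw => ?_
    obtain ⟨x, rfl⟩ := exists_val_add_one (mem_Icc.mp (hI hw)).1 (mem_Icc.mp (hI hw)).2
    exact ⟨x, by simpa [A] using hw, rfl⟩
  have hfix (τ : Perm (Fin n)) : I ⊆ Fset τ ↔ ∀ a ∈ A, τ a = a := by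
    simp only [subset_iff, Fset, mem_filter, A, mem_univ, true_and]
    refine ⟨fun h a ha => Fin.ext ?_, fun h w hw => ⟨hI hw, ?_⟩⟩
    · simpa [pv_val_add_one] using (h ha).2
    · obtain ⟨x, rfl⟩ := exists_val_add_one (mem_Icc.mp (hI hw)).1 (mem_Icc.mp (hI hw)).2
      rw [pv_val_add_one, h x hw]
  rw [filter_congr fun τ _ => hfix τ, ← hA]
  convert Equiv.Perm.card_filter_forall_mem_apply_eq_self A
  rw [Fintype.card_fin]

theorem lsuc_deg_general (n : ℕ) (I : Finset ℕ) (hI : I ⊆ Finset.Icc 1 n) :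
    ((Finset.univ : Finset (Equiv.Perm (Fin n))).filter (fun σ => Lbar σ = I)).card =
    ((Finset.univ : Finset (Equiv.Perm (Fin n))).filter (fun τ => Fset τ = I)).card := by
  refine eq_of_sum_superset_eq (f := fun J => #{σ : Perm (Fin n) | Lbar σ = J})
    (g := fun J => #{τ : Perm (Fin n) | Fset τ = J}) (fun J hJ => ?_) I hI
  rw [← card_filter_subset_eq_sum Lbar_subset_Icc,
    ← card_filter_subset_eq_sum (S := Fset) fun τ => filter_subset _ _,
    card_filter_subset_Lbar hJ, card_filter_subset_Fset hJ]

/-- Left-succession analogue of the Diaconis–Evans–Graham theorem. -/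
theorem lsuc_deg (n : ℕ) (hn : 1 ≤ n) (I : Finset ℕ) (hI : I ⊆ Finset.Icc 1 n) :
    ((Finset.univ : Finset (Equiv.Perm (Fin n))).filter (fun σ => Lbar σ = I)).card =
    ((Finset.univ : Finset (Equiv.Perm (Fin n))).filter (fun τ => Fset τ = I)).card :=
  lsuc_deg_general n I hI
end

section
/- Let D be the derivation on ℤ[a,x,y,z] with D(a) = az, D(x) = D(y) = D(z) = xy. Then for every n ≥ 0, Dⁿ(a) = a·F_n(x,y,z), where F_n(x,y,z) = Σ_{σ ∈ S_n} x^{exc(σ)} y^{drop(σ)} z^{fix(σ)} and F_0 = 1. -/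
open Finset

/-- Number of excedances: indices `i` with `σ(i) > i`. -/
def exc {n : ℕ} (σ : Equiv.Perm (Fin n)) : ℕ :=
  ((Finset.Icc 1 n).filter (fun i => i < pv σ i)).card

/-- Number of fixed points: indices `i` with `σ(i) = i`. -/
def fixpt {n : ℕ} (σ : Equiv.Perm (Fin n)) : ℕ :=
  ((Finset.Icc 1 n).filter (fun i => pv σ i = i)).card

/-- Number of left successions: indices `1 ≤ i ≤ n` with `σ(i-1) + 1 = σ(i)`. -/
def lsuc {n : ℕ} (σ : Equiv.Perm (Fin n)) : ℕ :=
  ((Finset.Icc 1 n).filter (fun i => pv σ (i - 1) + 1 = pv σ i)).card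

/-- Number of jumps: indices `1 ≤ i ≤ n` with `σ(i) ≥ σ(i-1) + 2`. -/
def jump {n : ℕ} (σ : Equiv.Perm (Fin n)) : ℕ :=
  ((Finset.Icc 1 n).filter (fun i => pv σ (i - 1) + 2 ≤ pv σ i)).card

/-- Number of drops: indices `i` with `σ(i) < i`. -/
def dropStat {n : ℕ} (σ : Equiv.Perm (Fin n)) : ℕ :=
  ((Finset.Icc 1 n).filter (fun i => pv σ i < i)).card

open MvPolynomial

/-- `F_n(x,y,z)` with `x = X 1`, `y = X 2`, `z = X 3` in `ℤ[a,x,y,z]` (`a = X 0`). -/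
noncomputable def Fpoly (n : ℕ) : MvPolynomial (Fin 4) ℤ :=
  ∑ σ : Equiv.Perm (Fin n), X 1 ^ exc σ * X 2 ^ dropStat σ * X 3 ^ fixpt σ

/-!
Weight a permutation `σ` by `∏ i, w(i, σ i)`, where the letter `w(i, j)` is `x`, `y` or `z`
according as `i < j`, `j < i` or `i = j`; then `F_n` is the sum of the weights over `S_n`, and
every letter has derivative `x y`. Extend `σ ∈ S_n` to `S_{n+1}` by inserting the new point
into its cycle notation: as a fixed point, which multiplies the weight by `z`, or right after
some `i`, which replaces the letter `w(i, σ i)` by an excedance at `i` and a drop at the new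
point, i.e. by `x y`. Summing over all insertions and using the Leibniz rule gives
`F_{n+1} = z F_n + D F_n`, which is exactly what `D^{n+1} a = D (a F_n)` requires.
-/

open Equiv

theorem Derivation.leibniz_prod {R A M ι : Type*} [CommSemiring R] [CommSemiring A]
    [AddCommMonoid M] [Algebra R A] [Module A M] [Module R M] [DecidableEq ι]
    (D : Derivation R A M) (s : Finset ι) (f : ι → A) :
    D (∏ i ∈ s, f i) = ∑ i ∈ s, (∏ j ∈ s.erase i, f j) • D (f i) := by
  induction s using Finset.induction_on with
  | empty => simp
  | insert a s ha ih =>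
    have herase : ∀ i ∈ s, ∏ j ∈ (insert a s).erase i, f j = f a * ∏ j ∈ s.erase i, f j :=
      fun i hi => by
        rw [Finset.erase_insert_of_ne (ne_of_mem_of_not_mem hi ha).symm,
          Finset.prod_insert (fun h => ha (Finset.mem_of_mem_erase h))]
    rw [Finset.prod_insert ha, Finset.sum_insert ha, Finset.erase_insert ha, leibniz, ih,
      Finset.sum_congr rfl fun i hi => congrArg (· • D (f i)) (herase i hi), Finset.smul_sum,
      add_comm]
    simp only [mul_smul]

section Statistics

variable {n : ℕ} (σ : Perm (Fin n))

theorem pv_add_one (i : Fin n) : pv σ (i + 1) = σ i + 1 := by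
  simp [pv]

theorem card_filter_Icc_pv (p : ℕ → ℕ → Prop) [DecidableRel p] :
    #{i ∈ Icc 1 n | p i (pv σ i)} = #{i : Fin n | p (i + 1) (σ i + 1)} := by
  symm
  refine card_nbij (fun i => (i : ℕ) + 1) (fun i hi => ?_) (fun i _ j _ h => ?_) fun m hm => ?_
  · simp only [coe_filter, Set.mem_ofPred_eq, mem_univ, true_and] at hi
    simp [pv_add_one, hi, i.isLt]
  · exact Fin.ext (by simpa using h)
  · simp only [coe_filter, mem_Icc, Set.mem_ofPred_eq] at hm
    have hm' : m - 1 + 1 = m := by omega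
    refine ⟨⟨m - 1, by omega⟩, ?_, by simp [hm']⟩
    simpa [← pv_add_one, hm'] using hm.2

theorem exc_eq_card : exc σ = #{i | i < σ i} := by
  simp [exc, card_filter_Icc_pv σ (· < ·)]

theorem dropStat_eq_card : dropStat σ = #{i | σ i < i} := by
  simp [dropStat, card_filter_Icc_pv σ (fun i j => j < i)]

theorem fixpt_eq_card : fixpt σ = #{i | σ i = i} := by
  simp [fixpt, card_filter_Icc_pv σ (fun i j => j = i), Fin.ext_iff]

end Statistics

section Insertion

open Fin

/-- `insertEquiv n (j, σ)` maps the new point `last n` to `j`; for `j ≠ last n` it maps `σ⁻¹ j`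
to `last n` and agrees with `σ` elsewhere, i.e. it inserts `last n` before `j` in the cycle
notation of `σ`. -/
def insertEquiv (n : ℕ) : Fin (n + 1) × Perm (Fin n) ≃ Perm (Fin (n + 1)) :=
  ((prodCongr finSuccEquivLast (Equiv.refl _)).trans Perm.decomposeOption.symm).trans
    (permCongr finSuccEquivLast).symm

variable {n : ℕ} (σ : Perm (Fin n))

theorem insertEquiv_apply (j k : Fin (n + 1)) :
    insertEquiv n (j, σ) k = finSuccEquivLast.symm
      (swap none (finSuccEquivLast j) ((finSuccEquivLast k).map σ)) := by
  simp [insertEquiv, permCongr_apply, Perm.decomposeOption_symm_apply]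

@[simp]
theorem insertEquiv_apply_last (j : Fin (n + 1)) : insertEquiv n (j, σ) (last n) = j := by
  simp [insertEquiv_apply]

@[simp]
theorem insertEquiv_last_apply_castSucc (i : Fin n) :
    insertEquiv n (last n, σ) (castSucc i) = castSucc (σ i) := by
  simp [insertEquiv_apply]

theorem insertEquiv_castSucc_apply_castSucc (i₀ i : Fin n) :
    insertEquiv n (castSucc (σ i₀), σ) (castSucc i) =
      if i = i₀ then last n else castSucc (σ i) := by
  split_ifs with h
  · simp [insertEquiv_apply, h]
  · rw [insertEquiv_apply, finSuccEquivLast_castSucc, finSuccEquivLast_castSucc, Option.map_some,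
      swap_apply_of_ne_of_ne (Option.some_ne_none _) (by simpa using h)]
    simp

end Insertion

section Weight

variable {A : Type*} (x y z : A)

def stepWeight {α : Type*} [LinearOrder α] (i j : α) : A :=
  if i < j then x else if j < i then y else z

@[simp]
theorem stepWeight_castSucc {n : ℕ} (i j : Fin n) :
    stepWeight x y z i.castSucc j.castSucc = stepWeight x y z i j := by
  simp [stepWeight]

variable [CommMonoid A]

def permWeight {α : Type*} [Fintype α] [LinearOrder α] (σ : Perm α) : A :=
  ∏ i, stepWeight x y z i (σ i)

theorem stepWeight_eq_pow {α : Type*} [LinearOrder α] (i j : α) :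
    stepWeight x y z i j = x ^ (if i < j then 1 else 0) * y ^ (if j < i then 1 else 0) *
      z ^ (if j = i then 1 else 0) := by
  rcases lt_trichotomy i j with h | rfl | h
  · simp [stepWeight, h, h.not_gt, h.ne']
  · simp [stepWeight]
  · simp [stepWeight, h, h.not_gt, h.ne]

theorem permWeight_eq_pow {α : Type*} [Fintype α] [LinearOrder α] (σ : Perm α) :
    permWeight x y z σ = x ^ #{i | i < σ i} * y ^ #{i | σ i < i} * z ^ #{i | σ i = i} := by
  simp only [permWeight, stepWeight_eq_pow, prod_mul_distrib, prod_pow_eq_pow_sum, sum_boole,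
    Nat.cast_id]

open Fin

variable {n : ℕ} (σ : Perm (Fin n))

theorem permWeight_insertEquiv_last :
    permWeight x y z (insertEquiv n (last n, σ)) = permWeight x y z σ * z := by
  simp [permWeight, prod_univ_castSucc, stepWeight]

theorem permWeight_insertEquiv_castSucc (i₀ : Fin n) :
    permWeight x y z (insertEquiv n (castSucc (σ i₀), σ)) =
      (∏ i ∈ univ.erase i₀, stepWeight x y z i (σ i)) * (x * y) := by
  have hrest : ∀ i ∈ univ.erase i₀, stepWeight x y z (castSucc i)
      (insertEquiv n (castSucc (σ i₀), σ) (castSucc i)) = stepWeight x y z i (σ i) := fun i hi => by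
    rw [insertEquiv_castSucc_apply_castSucc, if_neg (ne_of_mem_erase hi), stepWeight_castSucc]
  rw [permWeight, prod_univ_castSucc, ← mul_prod_erase univ _ (mem_univ i₀), prod_congr rfl hrest,
    insertEquiv_castSucc_apply_castSucc, if_pos rfl, insertEquiv_apply_last]
  simp only [stepWeight, castSucc_lt_last, not_lt_of_gt, if_true, if_false]
  rw [mul_comm x, mul_assoc]

end Weight

section Recursion

variable {A R : Type*} [CommSemiring A] (x y z : A) [CommSemiring R] [Algebra R A]
  (D : Derivation R A A) (hx : D x = x * y) (hy : D y = x * y) (hz : D z = x * y)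

def permWeightSum (n : ℕ) : A :=
  ∑ σ : Perm (Fin n), permWeight x y z σ

@[simp]
theorem permWeightSum_zero : permWeightSum x y z 0 = 1 := by
  simp [permWeightSum, permWeight]

include hx hy hz

theorem Derivation.apply_stepWeight {α : Type*} [LinearOrder α] (i j : α) :
    D (stepWeight x y z i j) = x * y := by
  unfold stepWeight
  split_ifs <;> assumption

theorem Derivation.apply_permWeight {n : ℕ} (σ : Perm (Fin n)) :
    D (permWeight x y z σ) = ∑ j : Fin n, permWeight x y z (insertEquiv n (j.castSucc, σ)) := by
  rw [← Equiv.sum_comp σ fun j => permWeight x y z (insertEquiv n (j.castSucc, σ)), permWeight,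
    D.leibniz_prod]
  simp only [D.apply_stepWeight x y z hx hy hz, smul_eq_mul, permWeight_insertEquiv_castSucc]

theorem permWeightSum_succ (n : ℕ) :
    permWeightSum x y z (n + 1) = permWeightSum x y z n * z + D (permWeightSum x y z n) := by
  rw [permWeightSum, ← (insertEquiv n).sum_comp, Fintype.sum_prod_type, sum_comm, permWeightSum,
    map_sum, sum_mul, ← sum_add_distrib]
  refine sum_congr rfl fun σ _ => ?_
  rw [Fin.sum_univ_castSucc, permWeight_insertEquiv_last, D.apply_permWeight x y z hx hy hz σ,
    add_comm]

theorem Derivation.iterate_eq_mul_permWeightSum (a : A) (ha : D a = a * z) (n : ℕ) :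
    D^[n] a = a * permWeightSum x y z n := by
  induction n with
  | zero => simp
  | succ n ih =>
    rw [Function.iterate_succ_apply', ih, D.leibniz, ha, permWeightSum_succ x y z D hx hy hz,
      smul_eq_mul, smul_eq_mul]
    ring

end Recursion

theorem Fpoly_eq_permWeightSum (n : ℕ) : Fpoly n = permWeightSum (X 1) (X 2) (X 3) n := by
  simp only [Fpoly, permWeightSum, permWeight_eq_pow, exc_eq_card, dropStat_eq_card, fixpt_eq_card]

/-- Dumont's theorem: for the derivation `D` on `ℤ[a,x,y,z]` with `D a = a z`,
`D x = D y = D z = x y`, we have `Dⁿ(a) = a F_n(x,y,z)`. -/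
theorem dumont (D : Derivation ℤ (MvPolynomial (Fin 4) ℤ) (MvPolynomial (Fin 4) ℤ))
    (ha : D (X 0) = X 0 * X 3) (hx : D (X 1) = X 1 * X 2)
    (hy : D (X 2) = X 1 * X 2) (hz : D (X 3) = X 1 * X 2) (n : ℕ) :
    (⇑D)^[n] (X 0) = X 0 * Fpoly n := by
  rw [Fpoly_eq_permWeightSum]
  exact D.iterate_eq_mul_permWeightSum _ _ _ hx hy hz _ ha n
end
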